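/- Let A be a 2×2 integer matrix with entries (2 1; 1 1). For every ε > 0 there exists a point P ∈ 𝔾_m^2(ℚ) with 0 < ĥ_A⁺(P) < ε. In particular the set of points of 𝔾_m^2(ℚ) with canonical height less than ε is infinite. -/

import Mathlib

open Filter NumberField IsDedekindDomain
open scoped Classical

noncomputable section

/-- The logarithm of the normalized absolute value of `a` at the finite place `v` of the
number field `K`:  `log ‖a‖_v = -(additive valuation of a) * log (norm of v)`. -/
def finVal (K : Type*) [Field K] [NumberField K]
    (v : HeightOneSpectrum (𝓞 K)) (a : K) : ℝ :=
  if h : a = 0 then 0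
  else (Multiplicative.toAdd (WithZero.unzero ((v.valuation K).ne_zero_iff.mpr h)) : ℤ) *
    Real.log (Ideal.absNorm v.asIdeal)

/-- The absolute logarithmic Weil height of a tuple of elements of a number field `K`:
`h(P) = Σ_{v ∈ M_K} max {0, log ‖x₁‖_v, …, log ‖x_N‖_v}` with suitably normalized
absolute values. -/
def logHeight (K : Type*) [Field K] [NumberField K] {N : ℕ} (x : Fin N → K) : ℝ :=
  (Module.finrank ℚ K : ℝ)⁻¹ *
    ((∑ w : InfinitePlace K, (w.mult : ℝ) * ⨆ i, max 0 (Real.log (w (x i)))) +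
     ∑ᶠ v : HeightOneSpectrum (𝓞 K), ⨆ i, max 0 (finVal K v (x i)))

/-- The height of a point of `𝔾_m^N(K)`. -/
def uHeight (K : Type*) [Field K] [NumberField K] {N : ℕ} (x : Fin N → Kˣ) : ℝ :=
  logHeight K (fun i => (x i : K))

/-- The monomial map associated to an integer matrix `A`:
`φ_A(x₁,…,x_N) = (∏ x_j^{a_{1j}}, …, ∏ x_j^{a_{Nj}})`. -/
def phi {G : Type*} [CommGroup G] {N : ℕ} (A : Matrix (Fin N) (Fin N) ℤ)
    (x : Fin N → G) : Fin N → G :=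
  fun i => ∏ j, (x j) ^ (A i j)

/-- The canonical height of P ∈ 𝔾_m²(ℚ) with respect to the monomial map of
A = (2 1; 1 1), i.e. limsup h(φ_A^n(P))/λ₁ⁿ with λ₁ = (3+√5)/2. -/
def hatHeightA (P : Fin 2 → ℚˣ) : ℝ :=
  Filter.limsup
    (fun n : ℕ =>
      uHeight ℚ ((phi (!![2, 1; 1, 1] : Matrix (Fin 2) (Fin 2) ℤ))^[n] P) /
        ((3 + Real.sqrt 5) / 2) ^ n)
    Filter.atTop


/-! Since `det A = 1`, `φ_A` is invertible on `𝔾_m²`, and if the limsup defining `ĥ(Q)` is a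
limit then `ĥ(φ_A⁻ᵏ Q) = ĥ(Q) / λ₁ᵏ`. For `Q = (2, 1)` the iterates
`φ_Aⁿ Q = (2^F₂ₙ₊₁, 2^F₂ₙ)` are integral points of height `F₂ₙ₊₁ log 2`, so Binet's formula gives
`ĥ(Q) = φ log 2 / √5 > 0`, where `φ` is the golden ratio and `λ₁ = φ²`. Hence the points
`φ_A⁻ᵏ Q` have pairwise distinct positive canonical heights tending to `0`. -/

open scoped Matrix Topology
open Real (goldenRatio goldenConj)

section MonomialMap

variable {G : Type*} [CommGroup G] {N : ℕ}

lemma zpow_finset_sum {ι : Type*} (u : G) (s : Finset ι) (f : ι → ℤ) :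
    u ^ (∑ j ∈ s, f j) = ∏ j ∈ s, u ^ f j := by
  induction s using Finset.cons_induction with
  | empty => simp
  | cons a s ha ih => rw [Finset.sum_cons, Finset.prod_cons, zpow_add, ih]

lemma phi_phi (A B : Matrix (Fin N) (Fin N) ℤ) (x : Fin N → G) :
    phi A (phi B x) = phi (A * B) x := by
  funext i
  simp only [phi, Matrix.mul_apply, zpow_finset_sum, ← Finset.prod_zpow, ← zpow_mul]
  rw [Finset.prod_comm]
  simp only [mul_comm]

lemma phi_one (x : Fin N → G) : phi 1 x = x := by
  funext i
  simp [phi, Matrix.one_apply]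

lemma phi_zpow (A : Matrix (Fin N) (Fin N) ℤ) (u : G) (c : Fin N → ℤ) :
    phi A (fun j => u ^ c j) = fun i => u ^ (A *ᵥ c) i := by
  funext i
  simp only [phi, Matrix.mulVec, dotProduct, zpow_finset_sum, ← zpow_mul, mul_comm]

lemma phi_iterate_zpow (A : Matrix (Fin N) (Fin N) ℤ) (u : G) (c : Fin N → ℤ) (n : ℕ) :
    (phi A)^[n] (fun j => u ^ c j) = fun i => u ^ (A ^ n *ᵥ c) i := by
  induction n with
  | zero => simp
  | succ n ih => rw [Function.iterate_succ_apply', ih, phi_zpow, pow_succ', Matrix.mulVec_mulVec]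

end MonomialMap

lemma finVal_algebraMap_nonpos (K : Type*) [Field K] [NumberField K]
    (v : HeightOneSpectrum (𝓞 K)) (x : 𝓞 K) : finVal K v (algebraMap (𝓞 K) K x) ≤ 0 := by
  unfold finVal
  split_ifs with hx
  · exact le_rfl
  refine mul_nonpos_of_nonpos_of_nonneg ?_ (Real.log_natCast_nonneg _)
  have h : WithZero.unzero ((v.valuation K).ne_zero_iff.mpr hx) ≤ 1 := by
    rw [← WithZero.coe_le_one, WithZero.coe_unzero]
    exact v.valuation_le_one x
  exact_mod_cast Multiplicative.toAdd_le.mpr h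

lemma logHeight_rat_intCast {N : ℕ} (x : Fin N → ℤ) :
    logHeight ℚ (fun i => (x i : ℚ)) = ⨆ i, Real.log |(x i : ℝ)| := by
  have hfin (v : HeightOneSpectrum (𝓞 ℚ)) : (⨆ i, max 0 (finVal ℚ v (x i))) = 0 := by
    have (i : Fin N) : finVal ℚ v (x i) ≤ 0 := by simpa using finVal_algebraMap_nonpos ℚ v (x i)
    simp [this]
  have hinf (i : Fin N) : max 0 (Real.log |(x i : ℝ)|) = Real.log |(x i : ℝ)| :=
    max_eq_right (by exact_mod_cast Real.log_intCast_nonneg |x i|)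
  simp only [logHeight, Module.finrank_self, Nat.cast_one, inv_one, one_mul, Finset.univ_unique,
    Finset.sum_singleton, Rat.infinitePlace_apply, hfin, finsum_zero, add_zero]
  rw [show (default : InfinitePlace ℚ).mult = 1 from Rat.isReal_infinitePlace.mult_eq_one]
  simp only [Nat.cast_one, one_mul, Rat.cast_abs, Rat.cast_intCast, hinf]

lemma three_add_sqrt_five_div_two : (3 + √5) / 2 = goldenRatio ^ 2 := by
  rw [Real.goldenRatio_sq, Real.goldenRatio]
  ring

lemma fib_two_mul_add_one_div_eq (n : ℕ) :
    (Nat.fib (2 * n + 1) : ℝ) / (goldenRatio ^ 2) ^ n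
      = (goldenRatio - goldenConj * (goldenConj ^ 4) ^ n) / √5 := by
  have hX : (goldenRatio ^ 2) ^ n * (goldenConj ^ 2) ^ n = 1 := by
    rw [← mul_pow, ← mul_pow, Real.goldenRatio_mul_goldenConj]
    norm_num
  have hfib : (Nat.fib (2 * n + 1) : ℝ)
      = (goldenRatio * (goldenRatio ^ 2) ^ n - goldenConj * (goldenConj ^ 2) ^ n) / √5 := by
    rw [Real.coe_fib_eq, pow_succ', pow_succ', pow_mul, pow_mul]
  have hY : (goldenConj ^ 4) ^ n = ((goldenConj ^ 2) ^ n) ^ 2 := by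
    rw [← pow_mul, ← pow_mul, ← pow_mul]
    ring_nf
  have hX0 : (goldenRatio ^ 2) ^ n ≠ 0 := by positivity
  rw [hfib, hY, div_right_comm]
  congr 1
  rw [div_eq_iff hX0]
  linear_combination goldenConj * (goldenConj ^ 2) ^ n * hX

lemma tendsto_fib_two_mul_add_one_div :
    Tendsto (fun n : ℕ => (Nat.fib (2 * n + 1) : ℝ) / (goldenRatio ^ 2) ^ n) atTop
      (𝓝 (goldenRatio / √5)) := by
  have hψ4 : goldenConj ^ 4 < 1 := by
    rw [show goldenConj ^ 4 = (goldenConj ^ 2) ^ 2 by ring]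
    refine pow_lt_one₀ (sq_nonneg _) ?_ two_ne_zero
    linarith [Real.goldenConj_sq, Real.goldenConj_neg]
  have hlim := ((tendsto_pow_atTop_nhds_zero_of_lt_one (by positivity) hψ4).const_mul
    goldenConj).const_sub goldenRatio |>.div_const √5
  simp only [mul_zero, sub_zero] at hlim
  simpa only [fib_two_mul_add_one_div_eq] using hlim

abbrev catMatrix : Matrix (Fin 2) (Fin 2) ℤ := !![2, 1; 1, 1]

lemma catMatrix_mul_inv : catMatrix * !![1, -1; -1, 2] = 1 := by
  rw [Matrix.mul_fin_two, Matrix.one_fin_two]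
  norm_num

lemma catMatrix_pow_mulVec (n : ℕ) :
    catMatrix ^ n *ᵥ ![1, 0] = ![(Nat.fib (2 * n + 1) : ℤ), (Nat.fib (2 * n) : ℤ)] := by
  induction n with
  | zero => simp
  | succ n ih =>
    rw [pow_succ', ← Matrix.mulVec_mulVec, ih]
    ext i
    fin_cases i <;>
      simp [Matrix.mulVec, dotProduct, Fin.sum_univ_two, Nat.mul_succ, Nat.fib_add_two] <;> ring

def basePoint : Fin 2 → ℚˣ := fun i => Units.mk0 (2 : ℚ) two_ne_zero ^ (![1, 0] : Fin 2 → ℤ) i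

lemma uHeight_iterate_basePoint (n : ℕ) :
    uHeight ℚ ((phi catMatrix)^[n] basePoint) = Nat.fib (2 * n + 1) * Real.log 2 := by
  have hcoe : (fun i => (((phi catMatrix)^[n] basePoint i : ℚˣ) : ℚ))
      = fun i => ((![2 ^ Nat.fib (2 * n + 1), 2 ^ Nat.fib (2 * n)] : Fin 2 → ℤ) i : ℚ) := by
    unfold basePoint
    rw [phi_iterate_zpow, catMatrix_pow_mulVec]
    funext i
    fin_cases i <;> simp
  rw [uHeight, hcoe, logHeight_rat_intCast]
  refine le_antisymm (ciSup_le fun i => ?_) (le_ciSup_of_le (Finite.bddAbove_range _) 0 ?_)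
  · have hmono : (Nat.fib (2 * n) : ℝ) ≤ Nat.fib (2 * n + 1) := by exact_mod_cast Nat.fib_le_fib_succ
    fin_cases i
    · simp
    · simpa using mul_le_mul_of_nonneg_right hmono (Real.log_nonneg one_le_two)
  · simp

lemma hatHeightA_eq_of_tendsto {P : Fin 2 → ℚˣ} {L : ℝ}
    (h : Tendsto (fun n => uHeight ℚ ((phi catMatrix)^[n] P) / (goldenRatio ^ 2) ^ n) atTop
      (𝓝 L)) :
    hatHeightA P = L := by
  rw [hatHeightA, three_add_sqrt_five_div_two]
  exact h.limsup_eq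

def smallPoint (k : ℕ) : Fin 2 → ℚˣ := (phi !![1, -1; -1, 2])^[k] basePoint

lemma iterate_smallPoint (k : ℕ) : (phi catMatrix)^[k] (smallPoint k) = basePoint :=
  Function.RightInverse.iterate (fun x => by rw [phi_phi, catMatrix_mul_inv, phi_one]) k basePoint

lemma hatHeightA_smallPoint (k : ℕ) :
    hatHeightA (smallPoint k) = goldenRatio / √5 * Real.log 2 / (goldenRatio ^ 2) ^ k := by
  refine hatHeightA_eq_of_tendsto ?_
  rw [← tendsto_add_atTop_iff_nat k]
  have hshift (n : ℕ) :
      uHeight ℚ ((phi catMatrix)^[n + k] (smallPoint k)) / (goldenRatio ^ 2) ^ (n + k)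
        = Nat.fib (2 * n + 1) / (goldenRatio ^ 2) ^ n * Real.log 2 / (goldenRatio ^ 2) ^ k := by
    rw [Function.iterate_add_apply, iterate_smallPoint, uHeight_iterate_basePoint, pow_add]
    ring
  simp only [hshift]
  exact (tendsto_fib_two_mul_add_one_div.mul_const _).div_const _

/-- For every ε > 0 there is a point of 𝔾_m²(ℚ) with 0 < ĥ_A⁺(P) < ε;
in particular the set of points of canonical height < ε is infinite. -/
theorem statement3 (ε : ℝ) (hε : 0 < ε) :
    (∃ P : Fin 2 → ℚˣ, 0 < hatHeightA P ∧ hatHeightA P < ε) ∧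
    {P : Fin 2 → ℚˣ | hatHeightA P < ε}.Infinite := by
  have hc : 0 < goldenRatio / √5 * Real.log 2 :=
    mul_pos (div_pos Real.goldenRatio_pos (by positivity)) (Real.log_pos one_lt_two)
  have hφ2 : 1 < goldenRatio ^ 2 := one_lt_pow₀ Real.one_lt_goldenRatio two_ne_zero
  have hpos (k : ℕ) : 0 < hatHeightA (smallPoint k) := by
    rw [hatHeightA_smallPoint]
    positivity
  have hanti : StrictAnti fun k => hatHeightA (smallPoint k) := fun a b hab => by
    simp only [hatHeightA_smallPoint]
    exact div_lt_div_of_pos_left hc (by positivity) (pow_lt_pow_right₀ hφ2 hab)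
  have hsmall : Tendsto (fun k => hatHeightA (smallPoint k)) atTop (𝓝 0) := by
    simp only [hatHeightA_smallPoint]
    exact tendsto_const_nhds.div_atTop (tendsto_pow_atTop_atTop_of_one_lt hφ2)
  obtain ⟨k₀, hk₀⟩ := eventually_atTop.mp (hsmall.eventually (gt_mem_nhds hε))
  refine ⟨⟨smallPoint k₀, hpos k₀, hk₀ k₀ le_rfl⟩, ?_⟩
  refine Set.infinite_of_injective_forall_mem (f := fun j => smallPoint (k₀ + j)) ?_
    fun j => hk₀ _ (Nat.le_add_right _ _)
  intro a b hab
  simpa using hanti.injective (congrArg hatHeightA hab)
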